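/- Let n ≥ 1, let p_1, ..., p_n be distinct real numbers, λ_1, ..., λ_n ∈ ℝ, and let g : ℝ → ℝ be differentiable with g(p_i) ≠ 0 for all i. Define v_j(z) = ∏_{k≠j} (z − p_k). Then det( (v_j g)′(p_i) − λ_i v_j(p_i) g(p_i) )_{1≤i,j≤n} = ( ∏_{k=1}^n g(p_k) v_k(p_k) ) · det( (1 − δ_{ij})/(p_i − p_j) + δ_{ij} ( Σ_{α≠i} 1/(p_i − p_α) + g′(p_i)/g(p_i) − λ_i ) )_{1≤i,j≤n}, where (v_j g)′ denotes the derivative of the product z ↦ v_j(z)g(z). (With g(z) = e^{Σ t_k z^k}, this identity exhibits the Calogero–Moser tau-function τ_n(t) as c_n e^{tr Σ t_i Ỹ^i} det(−X̃ + Σ_k k t_k Ỹ^{k−1}).) -/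

import Mathlib

/-!
Row `i` of the moment matrix records `(v_j g)' - λ_i v_j g` at the node `p_i`. The polynomial
`v_j` vanishes at every node except `p_j`, so off the diagonal only `v_j'(p_i) g(p_i)` survives,
and `v_j'(p_i) = v_i(p_i) / (p_i - p_j)`; on the diagonal the logarithmic derivative gives
`v_i'(p_i) = v_i(p_i) ∑_{α ≠ i} 1 / (p_i - p_α)`. Hence the moment matrix is
`diag (g(p_i) v_i(p_i))` times the Calogero–Moser matrix, and the identity is `det_mul`.
-/

open Finset

section NodalProduct

variable {𝕜 ι : Type*} [DecidableEq ι] (p : ι → 𝕜) (s : Finset ι)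

theorem hasDerivAt_prod_sub [NontriviallyNormedField 𝕜] (x : 𝕜) :
    HasDerivAt (fun z => ∏ k ∈ s, (z - p k)) (∑ a ∈ s, ∏ k ∈ s.erase a, (x - p k)) x := by
  simpa using HasDerivAt.fun_finsetProd (u := s) (f' := fun _ => (1 : 𝕜))
    fun k _ => (hasDerivAt_id x).sub_const (p k)

theorem sum_prod_erase_sub_eq_prod_mul_sum_inv [Field 𝕜] {x : 𝕜} (hx : ∀ a ∈ s, x ≠ p a) :
    ∑ a ∈ s, ∏ k ∈ s.erase a, (x - p k) = (∏ k ∈ s, (x - p k)) * ∑ a ∈ s, (x - p a)⁻¹ := by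
  rw [mul_sum]
  refine sum_congr rfl fun a ha => ?_
  rw [← prod_erase_mul _ _ ha, mul_assoc, mul_inv_cancel₀ (sub_ne_zero.mpr (hx a ha)), mul_one]

theorem sum_prod_erase_sub_at_node [CommRing 𝕜] {i : ι} (hi : i ∈ s) :
    ∑ a ∈ s, ∏ k ∈ s.erase a, (p i - p k) = ∏ k ∈ s.erase i, (p i - p k) :=
  sum_eq_single_of_mem i hi fun _ _ hai =>
    prod_eq_zero (mem_erase.mpr ⟨Ne.symm hai, hi⟩) (sub_self _)

end NodalProduct

section MomentMatrix

variable {𝕜 ι : Type*} [NontriviallyNormedField 𝕜] [Fintype ι] [DecidableEq ι]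
  {p : ι → 𝕜} {g : 𝕜 → 𝕜} (lam : ι → 𝕜)

theorem deriv_prod_erase_sub_mul {i : ι} (hg : DifferentiableAt 𝕜 g (p i)) (j : ι) :
    deriv (fun z => (∏ k ∈ univ.erase j, (z - p k)) * g z) (p i)
      = (∑ a ∈ univ.erase j, ∏ k ∈ (univ.erase j).erase a, (p i - p k)) * g (p i)
        + (∏ k ∈ univ.erase j, (p i - p k)) * deriv g (p i) :=
  ((hasDerivAt_prod_sub p _ (p i)).mul hg.hasDerivAt).deriv

theorem moment_entry_eq_diag {i : ι} (hp : Function.Injective p)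
    (hg : DifferentiableAt 𝕜 g (p i)) (hgi : g (p i) ≠ 0) :
    deriv (fun z => (∏ k ∈ univ.erase i, (z - p k)) * g z) (p i)
        - lam i * (∏ k ∈ univ.erase i, (p i - p k)) * g (p i)
      = (g (p i) * ∏ k ∈ univ.erase i, (p i - p k))
        * ((∑ a ∈ univ.erase i, 1 / (p i - p a)) + deriv g (p i) / g (p i) - lam i) := by
  have hnode : ∀ a ∈ univ.erase i, p i ≠ p a := fun a ha h =>
    (mem_erase.mp ha).1 (hp h).symm
  rw [deriv_prod_erase_sub_mul hg, sum_prod_erase_sub_eq_prod_mul_sum_inv p _ hnode]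
  simp only [one_div]
  field_simp

theorem moment_entry_eq_offDiag {i j : ι} (hp : Function.Injective p)
    (hg : DifferentiableAt 𝕜 g (p i)) (hij : i ≠ j) :
    deriv (fun z => (∏ k ∈ univ.erase j, (z - p k)) * g z) (p i)
        - lam i * (∏ k ∈ univ.erase j, (p i - p k)) * g (p i)
      = (g (p i) * ∏ k ∈ univ.erase i, (p i - p k)) * (1 / (p i - p j)) := by
  have hi : i ∈ univ.erase j := mem_erase.mpr ⟨hij, mem_univ i⟩
  have hvanish : ∏ k ∈ univ.erase j, (p i - p k) = 0 := prod_eq_zero hi (sub_self _)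
  have hsplit : ∏ k ∈ univ.erase i, (p i - p k)
      = (∏ k ∈ (univ.erase j).erase i, (p i - p k)) * (p i - p j) := by
    rw [erase_right_comm, prod_erase_mul _ _ (mem_erase.mpr ⟨hij.symm, mem_univ j⟩)]
  have hpij : p i - p j ≠ 0 := sub_ne_zero.mpr (hp.ne hij)
  rw [deriv_prod_erase_sub_mul hg, sum_prod_erase_sub_at_node p _ hi, hvanish, hsplit]
  field_simp
  ring

end MomentMatrix

theorem calogero_moser_determinant_identity
    (n : ℕ) (p : Fin n → ℝ) (hp : Function.Injective p)
    (lam : Fin n → ℝ) (g : ℝ → ℝ) (hg : Differentiable ℝ g)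
    (hgp : ∀ i : Fin n, g (p i) ≠ 0) :
    Matrix.det (Matrix.of fun i j : Fin n =>
        deriv (fun z : ℝ => (∏ k ∈ Finset.univ.erase j, (z - p k)) * g z) (p i)
          - lam i * (∏ k ∈ Finset.univ.erase j, (p i - p k)) * g (p i))
      = (∏ k : Fin n, g (p k) * ∏ j ∈ Finset.univ.erase k, (p k - p j)) *
          Matrix.det (Matrix.of fun i j : Fin n =>
            if i = j then
              (∑ a ∈ Finset.univ.erase i, 1 / (p i - p a))
                + deriv g (p i) / g (p i) - lam i
            else 1 / (p i - p j)) := by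
  rw [← Matrix.det_diagonal, ← Matrix.det_mul]
  congr 1
  ext i j
  rw [Matrix.diagonal_mul, Matrix.of_apply, Matrix.of_apply]
  split_ifs with hij
  · subst hij
    exact moment_entry_eq_diag lam hp (hg _) (hgp i)
  · exact moment_entry_eq_offDiag lam hp (hg _) hij
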